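/- arXiv:2202.07793 — 2 statements merged into one kernel-verified Lean document; each statement's English description precedes it below -/
import Mathlib

section
/- Let G be a graph and e = {u,v} a fill of G. If T is a tree-decomposition of G such that for every pair of adjacent nodes i, j of T, the separator X_i ∩ X_j does not separate u from v in G, then T (with the same bags) is also a tree-decomposition of G + e, and hence tw(G + e) ≤ width(T). -/
open SimpleGraph

/-- A tree-decomposition of `G`: a tree `T` with bags satisfying the
vertex-cover, edge-cover and connectivity (running intersection) conditions. -/
def IsTreeDecomp {V ι : Type} (G : SimpleGraph V) (T : SimpleGraph ι) (bag : ι → Set V) : Prop :=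
  T.Connected ∧ T.IsAcyclic ∧
  (∀ v : V, ∃ i, v ∈ bag i) ∧
  (∀ u v : V, G.Adj u v → ∃ i, u ∈ bag i ∧ v ∈ bag i) ∧
  (∀ v : V, (T.induce {i | v ∈ bag i}).Connected)

/-- Treewidth: the least `k` such that `G` has a tree-decomposition all of whose
bags have at most `k + 1` vertices. -/
noncomputable def tw {V : Type} (G : SimpleGraph V) : ℕ :=
  sInf {k | ∃ (ι : Type) (T : SimpleGraph ι) (bag : ι → Set V),
    IsTreeDecomp G T bag ∧ ∀ i, (bag i).ncard ≤ k + 1}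

/-- `S` separates `u` from `v` in `G`: both are outside `S` and every walk meets `S`. -/
def Separates {V : Type} (G : SimpleGraph V) (S : Set V) (u v : V) : Prop :=
  u ∉ S ∧ v ∉ S ∧ ∀ p : G.Walk u v, ∃ x ∈ p.support, x ∈ S

/-- A minimal separator: a minimal `a`–`b` separator for some `a`, `b`. -/
def IsMinSeparator {V : Type} (G : SimpleGraph V) (S : Set V) : Prop :=
  ∃ a b, Separates G S a b ∧ ∀ S' ⊂ S, ¬ Separates G S' a b

/-- Contraction of `G` by (the edge set of) `F`: vertices are the connected
components of `F`; two distinct components are adjacent iff some vertex of one is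
`G`-adjacent to some vertex of the other. -/
def contractBy {V : Type} (G F : SimpleGraph V) : SimpleGraph F.ConnectedComponent where
  Adj C D := C ≠ D ∧ ∃ u v : V,
    F.connectedComponentMk u = C ∧ F.connectedComponentMk v = D ∧ G.Adj u v
  symm := by constructor; rintro C D ⟨h, u, v, hu, hv, huv⟩; exact ⟨h.symm, v, u, hv, hu, huv.symm⟩
  loopless := by constructor; rintro C ⟨h, -⟩; exact h rfl

/-- `G` with the extra edge `{u, v}` added. -/
def addEdge {V : Type} (G : SimpleGraph V) (u v : V) : SimpleGraph V :=
  G ⊔ fromEdgeSet {s(u, v)}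

/-- `H` is a minor of `G`: disjoint nonempty connected branch sets in `G`,
one for each vertex of `H`, with edges of `H` realized between branch sets. -/
def IsMinorOf {W V : Type} (H : SimpleGraph W) (G : SimpleGraph V) : Prop :=
  ∃ B : W → Set V,
    (∀ w, (B w).Nonempty) ∧
    (∀ w, (G.induce (B w)).Connected) ∧
    (∀ w₁ w₂, w₁ ≠ w₂ → Disjoint (B w₁) (B w₂)) ∧
    (∀ w₁ w₂, H.Adj w₁ w₂ → ∃ u ∈ B w₁, ∃ v ∈ B w₂, G.Adj u v)

/-- Chordality: every cycle of length at least 4 has a chord. -/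
def IsChordal {V : Type} (H : SimpleGraph V) : Prop :=
  ∀ ⦃v : V⦄ (c : H.Walk v v), c.IsCycle → 4 ≤ c.length →
    ∃ x y, x ∈ c.support ∧ y ∈ c.support ∧ H.Adj x y ∧ s(x, y) ∉ c.edges

/-- `H` is a minimal triangulation of `G`. -/
def IsMinimalTriangulation {V : Type} (G H : SimpleGraph V) : Prop :=
  IsChordal H ∧ G ≤ H ∧ ∀ H' : SimpleGraph V, IsChordal H' → G ≤ H' → H' ≤ H → H' = H

/-- `X` is a maximal clique of `H`. -/
def IsMaximalClique {V : Type} (H : SimpleGraph V) (X : Set V) : Prop :=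
  H.IsClique X ∧ ∀ Y, H.IsClique Y → X ⊆ Y → X = Y

/-- `X` is a potential maximal clique of `G`. -/
def IsPMC {V : Type} (G : SimpleGraph V) (X : Set V) : Prop :=
  ∃ H, IsMinimalTriangulation G H ∧ IsMaximalClique H X

/-- The vertex set of the component `C` of `G \ S`. -/
def compSet {V : Type} (G : SimpleGraph V) (S : Set V)
    (C : (G.induce Sᶜ).ConnectedComponent) : Set V :=
  {v : V | ∃ h : v ∈ Sᶜ, (G.induce Sᶜ).connectedComponentMk ⟨v, h⟩ = C}

/-- The open neighborhood of a vertex set `W` in `G`. -/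
def nbhdSet {V : Type} (G : SimpleGraph V) (W : Set V) : Set V :=
  {v | v ∉ W ∧ ∃ u ∈ W, G.Adj u v}

/-- The induced subgraph on `U` with `S` completed into a clique. -/
def completedOn {V : Type} (G : SimpleGraph V) (U S : Set V) : SimpleGraph U where
  Adj a b := a ≠ b ∧ (G.Adj (a : V) (b : V) ∨ ((a : V) ∈ S ∧ (b : V) ∈ S))
  symm := by
    constructor
    rintro a b ⟨h1, h2⟩
    refine ⟨h1.symm, ?_⟩
    rcases h2 with h | h
    · exact Or.inl h.symm
    · exact Or.inr ⟨h.2, h.1⟩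
  loopless := by constructor; rintro a ⟨h, -⟩; exact h rfl

/-- The graph on `U` obtained from `G[U]` by adding the edges of the complete graph
`K(N(C))` for every component `C` of `G \ U`. -/
def realized {V : Type} (G : SimpleGraph V) (U : Set V) : SimpleGraph U where
  Adj a b := a ≠ b ∧ (G.Adj (a : V) (b : V) ∨ ∃ C : (G.induce Uᶜ).ConnectedComponent,
    (a : V) ∈ nbhdSet G (compSet G U C) ∧ (b : V) ∈ nbhdSet G (compSet G U C))
  symm := by
    constructor
    rintro a b ⟨h1, h2⟩
    refine ⟨h1.symm, ?_⟩
    rcases h2 with h | ⟨C, hx, hy⟩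
    · exact Or.inl h.symm
    · exact Or.inr ⟨C, hy, hx⟩
  loopless := by constructor; rintro a ⟨h, -⟩; exact h rfl

/-!
Suppose no bag contains both `u` and `v`. Walking along the tree from a bag containing `u`
to one containing `v`, let `ij` be the last edge leaving the subtree of bags that contain `u`.
Since `T` is a tree, deleting `ij` splits it into an `i`-side and a `j`-side; all bags of `u`
lie on the `i`-side and some bag of `v` on the `j`-side. A vertex with bags on both sides lies
in `bag i ∩ bag j`, and every edge of `G` lies in a bag, so along a `u`–`v` walk avoiding
`bag i ∩ bag j` the property "all bags lie on the `i`-side" is never lost, yet it fails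
at `v`. Hence `u` and `v` share a bag, which then also covers the new edge `uv`.
-/

namespace SimpleGraph

variable {ι : Type*} {T : SimpleGraph ι}

lemma mem_of_induce_connected_of_not_reachable_deleteEdges {s : Set ι} {i j k l : ι}
    (hs : (T.induce s).Connected) (hk : k ∈ s) (hl : l ∈ s)
    (hkl : ¬(T.deleteEdges {s(i, j)}).Reachable k l) : i ∈ s ∧ j ∈ s := by
  obtain ⟨p⟩ := hs.preconnected ⟨k, hk⟩ ⟨l, hl⟩
  have hq : ∀ m ∈ (p.map (Embedding.induce s).toHom).support, m ∈ s := by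
    simp only [Walk.support_map, List.mem_map]
    rintro _ ⟨m, -, rfl⟩
    exact m.2
  generalize p.map (Embedding.induce s).toHom = q at hq
  by_cases he : s(i, j) ∈ q.edges
  · exact ⟨hq i (q.fst_mem_support_of_mem_edges he), hq j (q.snd_mem_support_of_mem_edges he)⟩
  · exact absurd ⟨q.toDeleteEdge _ he⟩ hkl

lemma Walk.IsPath.exists_adj_reachable_deleteEdges {A : Set ι} :
    ∀ {a b : ι} {w : T.Walk a b}, w.IsPath → a ∈ A → b ∉ A →
      ∃ i ∈ A, ∃ j ∉ A, T.Adj i j ∧ (T.deleteEdges {s(i, j)}).Reachable j b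
  | _, _, .nil, _, ha, hb => absurd ha hb
  | x, _, .cons (v := y) hxy w, hp, hx, hb => by
    rw [Walk.cons_isPath_iff] at hp
    by_cases hy : y ∈ A
    · exact hp.1.exists_adj_reachable_deleteEdges hy hb
    · refine ⟨x, hx, y, hy, hxy, ⟨w.toDeleteEdge _ fun he => hp.2 ?_⟩⟩
      exact w.fst_mem_support_of_mem_edges he

end SimpleGraph

namespace IsTreeDecomp

variable {V ι : Type} {G : SimpleGraph V} {T : SimpleGraph ι} {bag : ι → Set V}

lemma mem_inter_of_adj_of_not_reachable (htd : IsTreeDecomp G T bag) {i j l : ι} {x y : V}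
    (hxy : G.Adj x y) (hx : ∀ m, x ∈ bag m → (T.deleteEdges {s(i, j)}).Reachable m i)
    (hl : y ∈ bag l) (hli : ¬(T.deleteEdges {s(i, j)}).Reachable l i) : y ∈ bag i ∩ bag j := by
  obtain ⟨m, hxm, hym⟩ := htd.2.2.2.1 x y hxy
  exact mem_of_induce_connected_of_not_reachable_deleteEdges (htd.2.2.2.2 y) hym hl
    fun hml => hli (hml.symm.trans (hx m hxm))

lemma forall_reachable_of_walk (htd : IsTreeDecomp G T bag) {i j : ι} :
    ∀ {x y : V} (p : G.Walk x y), (∀ z ∈ p.support, z ∉ bag i ∩ bag j) →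
      (∀ m, x ∈ bag m → (T.deleteEdges {s(i, j)}).Reachable m i) →
      ∀ m, y ∈ bag m → (T.deleteEdges {s(i, j)}).Reachable m i
  | _, _, .nil, _, hx => hx
  | _, _, .cons (v := c) hxc p, havoid, hx => by
    refine htd.forall_reachable_of_walk p (fun z hz => havoid z (List.mem_cons_of_mem _ hz)) ?_
    intro l hl
    by_contra hli
    exact havoid c (p.start_mem_support.tail _)
      (htd.mem_inter_of_adj_of_not_reachable hxc hx hl hli)

lemma exists_adj_separates (htd : IsTreeDecomp G T bag) {u v : V}
    (huv : ∀ m, u ∈ bag m → v ∉ bag m) : ∃ i j, T.Adj i j ∧ Separates G (bag i ∩ bag j) u v := by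
  classical
  obtain ⟨a, ha⟩ := htd.2.2.1 u
  obtain ⟨b, hb⟩ := htd.2.2.1 v
  obtain ⟨w⟩ := htd.1.preconnected a b
  obtain ⟨i, hi, j, hj, hij, hjb⟩ :=
    w.toPath.2.exists_adj_reachable_deleteEdges (A := {m | u ∈ bag m}) ha fun h => huv b h hb
  have hbridge : ¬(T.deleteEdges {s(i, j)}).Reachable i j :=
    isBridge_iff.mp (isAcyclic_iff_forall_adj_isBridge.mp htd.2.1 hij)
  have hu : ∀ m, u ∈ bag m → (T.deleteEdges {s(i, j)}).Reachable m i := fun m hm => by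
    by_contra hmi
    exact hj (mem_of_induce_connected_of_not_reachable_deleteEdges (htd.2.2.2.2 u) hi hm
      fun him => hmi him.symm).2
  refine ⟨i, j, hij, fun h => hj h.2, fun h => huv i hi h.1, fun p => ?_⟩
  by_contra! hp
  exact hbridge ((htd.forall_reachable_of_walk p hp hu b hb).symm.trans hjb.symm)

lemma addEdge_of_mem (htd : IsTreeDecomp G T bag) {u v : V} {m : ι} (hu : u ∈ bag m)
    (hv : v ∈ bag m) : IsTreeDecomp (addEdge G u v) T bag := by
  obtain ⟨hT, hTa, hcov, hedge, hsub⟩ := htd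
  refine ⟨hT, hTa, hcov, ?_, hsub⟩
  rintro x y (hxy | hxy)
  · exact hedge x y hxy
  · simp only [fromEdgeSet_adj, Set.mem_singleton_iff, Sym2.eq_iff] at hxy
    rcases hxy.1 with ⟨rfl, rfl⟩ | ⟨rfl, rfl⟩
    exacts [⟨m, hu, hv⟩, ⟨m, hv, hu⟩]

lemma tw_le (htd : IsTreeDecomp G T bag) {k : ℕ} (hk : ∀ i, (bag i).ncard ≤ k + 1) : tw G ≤ k :=
  Nat.sInf_le ⟨ι, T, bag, htd, hk⟩

end IsTreeDecomp

theorem stmt4_general {V ι : Type} (G : SimpleGraph V) (u v : V) (T : SimpleGraph ι) (bag : ι → Set V)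
    (htd : IsTreeDecomp G T bag)
    (hsep : ∀ i j, T.Adj i j → ¬ Separates G (bag i ∩ bag j) u v) :
    IsTreeDecomp (addEdge G u v) T bag ∧
      ∀ k, (∀ i, (bag i).ncard ≤ k + 1) → tw (addEdge G u v) ≤ k := by
  obtain ⟨m, hum, hvm⟩ : ∃ m, u ∈ bag m ∧ v ∈ bag m := by
    by_contra! h
    obtain ⟨i, j, hij, hS⟩ := htd.exists_adj_separates h
    exact hsep i j hij hS
  have htd' := htd.addEdge_of_mem hum hvm
  exact ⟨htd', fun k hk => htd'.tw_le hk⟩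

/-- if no separator induced by the tree-decomposition `T` of `G`
separates `u` from `v`, then `T` is also a tree-decomposition of `G + e`
(where `e = {u,v}` is a fill), and hence `tw(G+e)` is at most its width. -/
theorem stmt4 {V ι : Type} [Finite V] (G : SimpleGraph V) (u v : V) (hne : u ≠ v)
    (hnadj : ¬ G.Adj u v) (T : SimpleGraph ι) (bag : ι → Set V)
    (htd : IsTreeDecomp G T bag)
    (hsep : ∀ i j, T.Adj i j → ¬ Separates G (bag i ∩ bag j) u v) :
    IsTreeDecomp (addEdge G u v) T bag ∧
      ∀ k, (∀ i, (bag i).ncard ≤ k + 1) → tw (addEdge G u v) ≤ k :=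
  stmt4_general G u v T bag htd hsep
end

section
/- If S is a clique separator of G (S is a clique and G \ S is disconnected), then tw(G) equals the maximum over all components C of G \ S of tw(G[C ∪ S] with S completed into a clique); in particular tw(G) = max over components C of tw(G[N[C]] plus clique edges on S). -/
/-!
A finite clique lies in a single bag of every tree decomposition: take a bag meeting it
maximally; a missing vertex `v` would force the whole intersection across the tree edge by
which the bags of `v` are entered, into a bag that also contains `v`. Hence, `S` being a clique
of `G`, completing `S` adds no edge, each block `G[C ∪ S]` is a subgraph of `G`, and its treewidth
is at most `tw G`. Conversely, each block has an optimal decomposition with a bag containing `S`;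
hanging all these trees from a new root with bag `S` gives a tree decomposition of `G`, since
distinct components meet only in `S` and every edge of `G` lies in `S` or in a single block.
-/

open SimpleGraph

namespace SimpleGraph

variable {α β : Type*}

lemma Reachable.map_of_eq_or_adj {A : SimpleGraph α} {B : SimpleGraph β} (f : α → β)
    (hf : ∀ x y, A.Adj x y → f x = f y ∨ B.Adj (f x) (f y)) {x y : α} (h : A.Reachable x y) :
    B.Reachable (f x) (f y) := by
  obtain ⟨p⟩ := h
  induction p with
  | nil => rfl
  | cons h _ ih => exact (hf _ _ h).elim (· ▸ ih) fun hB => hB.reachable.trans ih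

lemma connected_of_forall_reachable {G : SimpleGraph α} (a : α) (h : ∀ x, G.Reachable x a) :
    G.Connected :=
  (connected_iff G).mpr ⟨fun x y => (h x).trans (h y).symm, ⟨a⟩⟩

lemma fromRel_isBridge_of_eq_or_adj {R : α → α → Prop} {B : SimpleGraph β} (f : α → β)
    {a b : α} (hf : ∀ x y, R x y → s(x, y) ≠ s(a, b) → f x = f y ∨ B.Adj (f x) (f y))
    (hB : ¬ B.Reachable (f a) (f b)) : (fromRel R).IsBridge s(a, b) := by
  refine isBridge_iff.mpr fun h => hB (h.map_of_eq_or_adj f fun x y hxy => ?_)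
  obtain ⟨⟨-, hxy | hyx⟩, he⟩ := (deleteEdges_adj ..).mp hxy
  · exact hf x y hxy he
  · exact (hf y x hyx (Sym2.eq_swap ▸ he)).imp Eq.symm Adj.symm

lemma reachable_deleteEdges_of_preconnected_induce {G : SimpleGraph α} {W : Set α}
    (hW : (G.induce W).Preconnected) {x y a b : α} (hx : x ∈ W) (hy : y ∈ W)
    (hab : a ∉ W ∨ b ∉ W) : (G.deleteEdges {s(a, b)}).Reachable x y := by
  obtain ⟨p⟩ := hW ⟨x, hx⟩ ⟨y, hy⟩
  let q := p.map (Embedding.induce W).toHom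
  have hq : s(a, b) ∉ q.edges := by
    intro he
    have hsupp : ∀ z ∈ q.support, z ∈ W := by
      simp only [q, Walk.support_map, List.mem_map]
      rintro _ ⟨z, -, rfl⟩
      exact z.2
    exact hab.elim (· <| hsupp a (q.fst_mem_support_of_mem_edges he))
      (· <| hsupp b (q.snd_mem_support_of_mem_edges he))
  exact ⟨q.toDeleteEdge _ hq⟩

lemma Walk.exists_adj_reachable_deleteEdges_of_notMem_of_mem {G : SimpleGraph α} {M : Set α}
    {x t : α} (p : G.Walk x t) (hx : x ∉ M) (ht : t ∈ M) :
    ∃ a b, G.Adj a b ∧ a ∉ M ∧ b ∈ M ∧ (G.deleteEdges {s(a, b)}).Reachable x a := by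
  induction p with
  | nil => exact absurd ht hx
  | @cons u v w h q ih =>
    by_cases hv : v ∈ M
    · exact ⟨u, v, h, hx, hv, Reachable.refl _⟩
    · obtain ⟨a, b, hab, haM, hbM, hreach⟩ := ih hv ht
      refine ⟨a, b, hab, haM, hbM, Reachable.trans (Adj.reachable ?_) hreach⟩
      refine (deleteEdges_adj ..).mpr ⟨h, fun he => ?_⟩
      rcases Sym2.eq_iff.mp he with ⟨-, rfl⟩ | ⟨rfl, -⟩
      exacts [hv hbM, hx hbM]

end SimpleGraph

section TreeDecomp

variable {V W ι : Type} {G : SimpleGraph V} {T : SimpleGraph ι} {bag : ι → Set V}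

theorem IsTreeDecomp.exists_subset_bag_of_isClique (hd : IsTreeDecomp G T bag) {S : Set V}
    (hS : G.IsClique S) (hSfin : S.Finite) : ∃ i, S ⊆ bag i := by
  obtain ⟨hTc, hTa, hcov, hedge, hconn⟩ := hd
  obtain ⟨i, hi⟩ : ∃ i, ∀ k, (S ∩ bag k).ncard ≤ (S ∩ bag i).ncard := by
    have hbdd : BddAbove (Set.range fun k => (S ∩ bag k).ncard) :=
      ⟨S.ncard, by rintro _ ⟨k, rfl⟩; exact Set.ncard_le_ncard Set.inter_subset_left hSfin⟩
    have := hTc.nonempty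
    obtain ⟨i, hi⟩ := Nat.sSup_mem (Set.range_nonempty _) hbdd
    exact ⟨i, fun k => (le_csSup hbdd ⟨k, rfl⟩).trans_eq hi.symm⟩
  refine ⟨i, fun v hvS => by_contra fun hvi => ?_⟩
  obtain ⟨t, ht⟩ := hcov v
  obtain ⟨j', j, hadj, hj', hj, hij'⟩ :=
    (hTc.preconnected i t).some.exists_adj_reachable_deleteEdges_of_notMem_of_mem
      (M := {k | v ∈ bag k}) hvi ht
  have hbridge := isBridge_iff.mp (isAcyclic_iff_forall_adj_isBridge.mp hTa hadj)
  -- `j'j` separates `i` from every bag containing `v`, so each `u ∈ S ∩ bag i` must cross it.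
  have hsub : insert v (S ∩ bag i) ⊆ S ∩ bag j := by
    rintro u (rfl | ⟨huS, hui⟩)
    · exact ⟨hvS, hj⟩
    obtain ⟨m, hum, hvm⟩ := hedge u v (hS huS hvS fun h => hvi (h ▸ hui))
    have hmj : (T.deleteEdges {s(j', j)}).Reachable m j :=
      reachable_deleteEdges_of_preconnected_induce (hconn v).preconnected hvm hj (Or.inl hj')
    refine ⟨huS, by_contra fun huj => hbridge ?_⟩
    exact hij'.symm.trans <| (reachable_deleteEdges_of_preconnected_induce
      (hconn u).preconnected (x := i) hui hum (Or.inr huj)).trans hmj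
  have := Set.ncard_le_ncard hsub (hSfin.subset Set.inter_subset_left)
  rw [Set.ncard_insert_of_notMem (fun h => hvi h.2) (hSfin.subset Set.inter_subset_left)] at this
  exact (hi j).not_gt this

theorem tw_le_of_isTreeDecomp {k : ℕ} (hd : IsTreeDecomp G T bag)
    (hw : ∀ i, (bag i).ncard ≤ k + 1) : tw G ≤ k :=
  Nat.sInf_le ⟨ι, T, bag, hd, hw⟩

theorem exists_isTreeDecomp_ncard_le_tw [Finite V] (G : SimpleGraph V) :
    ∃ (ι : Type) (T : SimpleGraph ι) (bag : ι → Set V),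
      IsTreeDecomp G T bag ∧ ∀ i, (bag i).ncard ≤ tw G + 1 := by
  have hne : {k | ∃ (ι : Type) (T : SimpleGraph ι) (bag : ι → Set V),
      IsTreeDecomp G T bag ∧ ∀ i, (bag i).ncard ≤ k + 1}.Nonempty := by
    refine ⟨Nat.card V, Unit, ⊥, fun _ => Set.univ, ⟨.of_subsingleton, isAcyclic_bot,
      fun _ => ⟨(), trivial⟩, fun _ _ _ => ⟨(), trivial, trivial⟩, fun v => ?_⟩, fun _ => ?_⟩
    · have : Nonempty ({_i : Unit | v ∈ (Set.univ : Set V)}) := ⟨⟨(), trivial⟩⟩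
      exact .of_subsingleton
    · rw [Set.ncard_univ]
      omega
  exact Nat.sInf_mem hne

theorem IsTreeDecomp.comap {H : SimpleGraph W} (hd : IsTreeDecomp G T bag) (f : H →g G) :
    IsTreeDecomp H T fun i => f ⁻¹' bag i := by
  obtain ⟨hTc, hTa, hcov, hedge, hconn⟩ := hd
  exact ⟨hTc, hTa, fun w => hcov (f w), fun u v huv => hedge _ _ (f.map_adj huv),
    fun w => hconn (f w)⟩

theorem tw_le_tw_of_injective [Finite V] {H : SimpleGraph W} (f : H →g G)
    (hf : Function.Injective f) : tw H ≤ tw G := by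
  obtain ⟨ι, T, bag, hd, hw⟩ := exists_isTreeDecomp_ncard_le_tw G
  refine tw_le_of_isTreeDecomp (hd.comap f) fun i => le_trans ?_ (hw i)
  exact Set.ncard_le_ncard_of_injOn f (fun _ h => h) hf.injOn

end TreeDecomp

section RootedSum

variable {κ : Type} {ι : κ → Type} (T : ∀ C, SimpleGraph (ι C)) (r : ∀ C, ι C)

/-- The trees `T C` hung from a new vertex `none`, joined to the root `r C` of each of them. -/
def rootedSum : SimpleGraph (Option (Σ C, ι C)) :=
  fromRel fun x y => (∃ C i j, (T C).Adj i j ∧ x = some ⟨C, i⟩ ∧ y = some ⟨C, j⟩) ∨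
    ∃ C, x = none ∧ y = some ⟨C, r C⟩

def rootedSumIncl (C : κ) : T C →g rootedSum T r where
  toFun i := some ⟨C, i⟩
  map_rel' {i j} h := (fromRel_adj _ _ _).mpr
    ⟨by simpa using h.ne, Or.inl (Or.inl ⟨C, i, j, h, rfl, rfl⟩)⟩

variable {T r}

theorem rootedSum_adj_none (C : κ) : (rootedSum T r).Adj none (some ⟨C, r C⟩) :=
  (fromRel_adj _ _ _).mpr ⟨by simp, Or.inl (Or.inr ⟨C, rfl, rfl⟩)⟩

theorem rootedSum_connected (hT : ∀ C, (T C).Preconnected) : (rootedSum T r).Connected := by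
  refine connected_of_forall_reachable none ?_
  rintro (_ | ⟨C, i⟩)
  · rfl
  · exact ((hT C i (r C)).map (rootedSumIncl T r C)).trans (rootedSum_adj_none C).symm.reachable

theorem rootedSum_isAcyclic (hT : ∀ C, (T C).IsAcyclic) : (rootedSum T r).IsAcyclic := by
  classical
  suffices h : ∀ x y, ((∃ C i j, (T C).Adj i j ∧ x = some ⟨C, i⟩ ∧ y = some ⟨C, j⟩) ∨
      ∃ C, x = none ∧ y = some ⟨C, r C⟩) → (rootedSum T r).IsBridge s(x, y) by
    refine isAcyclic_iff_forall_adj_isBridge.mpr fun x y hxy => ?_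
    rcases ((fromRel_adj _ _ _).mp hxy).2 with hxy | hyx
    exacts [h x y hxy, Sym2.eq_swap ▸ h y x hyx]
  rintro x y (⟨C, i, j, hij, rfl, rfl⟩ | ⟨C, rfl, rfl⟩)
  · -- retract everything outside the `C`-th tree onto its root
    let ρ : Option (Σ C, ι C) → ι C :=
      fun x => x.elim (r C) fun p => if h : p.1 = C then h ▸ p.2 else r C
    have hρ : ∀ k, ρ (some ⟨C, k⟩) = k := fun k => dif_pos rfl
    refine fromRel_isBridge_of_eq_or_adj (B := (T C).deleteEdges {s(i, j)}) ρ ?_ ?_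
    · rintro _ _ (⟨D, a, b, hab, rfl, rfl⟩ | ⟨D, rfl, rfl⟩) hne
      · by_cases hD : D = C
        · subst hD
          refine Or.inr ((deleteEdges_adj ..).mpr ⟨by rwa [hρ, hρ], ?_⟩)
          rw [hρ, hρ]
          rintro he
          apply hne
          rcases Sym2.eq_iff.mp he with ⟨rfl, rfl⟩ | ⟨rfl, rfl⟩
          exacts [rfl, Sym2.eq_swap]
        · simp [ρ, hD]
      · rcases eq_or_ne D C with rfl | hD <;> simp [ρ, *]
    · rw [hρ, hρ]
      exact isBridge_iff.mp (isAcyclic_iff_forall_adj_isBridge.mp (hT C) hij)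
  · -- the indicator of the `C`-th tree is constant along every other edge
    let χ : Option (Σ C, ι C) → Bool := fun x => x.elim false fun p => decide (p.1 = C)
    refine fromRel_isBridge_of_eq_or_adj (B := ⊥) χ ?_ (by simp [χ, reachable_bot])
    rintro _ _ (⟨D, a, b, -, rfl, rfl⟩ | ⟨D, rfl, rfl⟩) hne
    · simp [χ]
    · have hD : D ≠ C := by rintro rfl; exact hne rfl
      simp [χ, hD]

theorem isTreeDecomp_rootedSum {V : Type} {G : SimpleGraph V} {S : Set V}
    (B : ∀ C, ι C → Set V) (hT : ∀ C, (T C).IsTree) (hroot : ∀ C, S ⊆ B C (r C))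
    (hcov : ∀ v ∉ S, ∃ C i, v ∈ B C i)
    (hedge : ∀ u v, G.Adj u v → u ∉ S → ∃ C i, u ∈ B C i ∧ v ∈ B C i)
    (hconn : ∀ C v, ((T C).induce {i | v ∈ B C i}).Preconnected)
    (hsep : ∀ v ∉ S, ∀ C D i j, v ∈ B C i → v ∈ B D j → C = D) :
    IsTreeDecomp G (rootedSum T r) fun x => x.elim S fun p => B p.1 p.2 := by
  refine ⟨rootedSum_connected fun C => (hT C).1.preconnected,
    rootedSum_isAcyclic fun C => (hT C).2, fun v => ?_, fun u v huv => ?_, fun v => ?_⟩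
  · by_cases hv : v ∈ S
    · exact ⟨none, hv⟩
    · obtain ⟨C, i, hi⟩ := hcov v hv
      exact ⟨some ⟨C, i⟩, hi⟩
  · by_cases hu : u ∈ S
    · by_cases hv : v ∈ S
      · exact ⟨none, hu, hv⟩
      · obtain ⟨C, i, hv, hu⟩ := hedge v u huv.symm hv
        exact ⟨some ⟨C, i⟩, hu, hv⟩
    · obtain ⟨C, i, hu, hv⟩ := hedge u v huv hu
      exact ⟨some ⟨C, i⟩, hu, hv⟩
  · set M : Set (Option (Σ C, ι C)) := {x | v ∈ x.elim S fun p => B p.1 p.2}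
    have hblock : ∀ C i j (hi : v ∈ B C i) (hj : v ∈ B C j),
        ((rootedSum T r).induce M).Reachable ⟨some ⟨C, i⟩, hi⟩ ⟨some ⟨C, j⟩, hj⟩ :=
      fun C i j hi hj =>
        (hconn C v ⟨i, hi⟩ ⟨j, hj⟩).map (induceHom (t := M) (rootedSumIncl T r C) fun _ h => h)
    by_cases hv : v ∈ S
    · refine connected_of_forall_reachable ⟨none, hv⟩ ?_
      rintro ⟨_ | ⟨C, i⟩, hi⟩
      · rfl
      · exact (hblock C i (r C) hi (hroot C hv)).trans
          (Adj.reachable (G := (rootedSum T r).induce _) (rootedSum_adj_none C).symm)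
    · obtain ⟨C, i, hi⟩ := hcov v hv
      refine connected_of_forall_reachable ⟨some ⟨C, i⟩, hi⟩ ?_
      rintro ⟨_ | ⟨D, j⟩, hj⟩
      · exact absurd hj hv
      · obtain rfl := hsep v hv D C j i hj hi
        exact hblock D j i hj hi

end RootedSum

section CliqueSeparator

variable {V : Type} {G : SimpleGraph V} {S : Set V}

theorem mem_compSet_connectedComponentMk {v : V} (hv : v ∉ S) :
    v ∈ compSet G S ((G.induce Sᶜ).connectedComponentMk ⟨v, hv⟩) :=
  ⟨hv, rfl⟩

theorem eq_of_mem_compSet {v : V} {C D : (G.induce Sᶜ).ConnectedComponent}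
    (hC : v ∈ compSet G S C) (hD : v ∈ compSet G S D) : C = D := by
  obtain ⟨_, rfl⟩ := hC
  obtain ⟨_, rfl⟩ := hD
  rfl

theorem mem_compSet_union_of_adj {u v : V} {C : (G.induce Sᶜ).ConnectedComponent}
    (hu : u ∈ compSet G S C) (huv : G.Adj u v) : v ∈ compSet G S C ∪ S := by
  by_cases hv : v ∈ S
  · exact Or.inr hv
  obtain ⟨hu', rfl⟩ := hu
  exact Or.inl ⟨hv, ConnectedComponent.eq.mpr (Adj.reachable (G := G.induce Sᶜ) huv.symm)⟩

theorem isClique_completedOn (U : Set V) : (completedOn G U S).IsClique {u : U | (u : V) ∈ S} :=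
  fun _ ha _ hb hab => ⟨hab, Or.inr ⟨ha, hb⟩⟩

theorem tw_completedOn_le [Finite V] (hS : G.IsClique S) (U : Set V) :
    tw (completedOn G U S) ≤ tw G :=
  tw_le_tw_of_injective ⟨Subtype.val, fun ⟨hne, h⟩ =>
    h.elim id fun h => hS h.1 h.2 (Subtype.coe_ne_coe.mpr hne)⟩ Subtype.val_injective

theorem exists_isTreeDecomp_completedOn [Finite V] (U : Set V) :
    ∃ (ι : Type) (T : SimpleGraph ι) (bag : ι → Set U) (r : ι),
      IsTreeDecomp (completedOn G U S) T bag ∧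
      (∀ i, (bag i).ncard ≤ tw (completedOn G U S) + 1) ∧ {u : U | (u : V) ∈ S} ⊆ bag r := by
  obtain ⟨ι, T, bag, hd, hw⟩ := exists_isTreeDecomp_ncard_le_tw (completedOn G U S)
  obtain ⟨r, hr⟩ := hd.exists_subset_bag_of_isClique (isClique_completedOn U) (Set.toFinite _)
  exact ⟨ι, T, bag, r, hd, hw, hr⟩

theorem tw_le_of_forall_tw_completedOn_le [Finite V]
    [Nonempty (G.induce Sᶜ).ConnectedComponent] {M : ℕ}
    (hM : ∀ C, tw (completedOn G (compSet G S C ∪ S) S) ≤ M) : tw G ≤ M := by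
  choose ι T bag r hd hw hr using fun C => exists_isTreeDecomp_completedOn (G := G) (S := S)
    (compSet G S C ∪ S)
  let B : ∀ C, ι C → Set V := fun C i => Subtype.val '' bag C i
  have hB : ∀ C i, (B C i).ncard ≤ M + 1 := fun C i => by
    rw [Set.ncard_image_of_injective _ Subtype.val_injective]
    exact (hw C i).trans (Nat.succ_le_succ (hM C))
  have hroot : ∀ C, S ⊆ B C (r C) := fun C v hv => ⟨⟨v, Or.inr hv⟩, hr C hv, rfl⟩
  have hdec := isTreeDecomp_rootedSum (G := G) (T := T) (r := r) B
    (fun C => ⟨(hd C).1, (hd C).2.1⟩) hroot ?cov ?edge ?conn ?sep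
  · refine tw_le_of_isTreeDecomp hdec ?_
    rintro (_ | ⟨C, i⟩)
    · obtain ⟨C⟩ := ‹Nonempty (G.induce Sᶜ).ConnectedComponent›
      exact (Set.ncard_le_ncard (hroot C)).trans (hB C (r C))
    · exact hB C i
  case cov =>
    intro v hv
    obtain ⟨i, hi⟩ := (hd _).2.2.1 ⟨v, Or.inl (mem_compSet_connectedComponentMk hv)⟩
    exact ⟨_, i, _, hi, rfl⟩
  case edge =>
    intro u v huv hu
    have hu' := mem_compSet_connectedComponentMk (G := G) hu
    obtain ⟨i, hui, hvi⟩ := (hd _).2.2.2.1 ⟨u, Or.inl hu'⟩ ⟨v, mem_compSet_union_of_adj hu' huv⟩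
      ⟨fun h => huv.ne (congrArg Subtype.val h), Or.inl huv⟩
    exact ⟨_, i, ⟨_, hui, rfl⟩, ⟨_, hvi, rfl⟩⟩
  case conn =>
    rintro C v ⟨i, hi⟩ ⟨j, hj⟩
    obtain ⟨u, hui, rfl⟩ := hi
    obtain ⟨w, hwj, hwu⟩ := hj
    obtain rfl := Subtype.ext hwu
    exact (((hd C).2.2.2.2 w).preconnected ⟨i, hui⟩ ⟨j, hwj⟩).map
      (induceHom (t := {k | (w : V) ∈ B C k}) Hom.id fun k hk => ⟨w, hk, rfl⟩)
  case sep =>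
    rintro v hv C D i j ⟨w, -, rfl⟩ ⟨w', -, hw'⟩
    exact eq_of_mem_compSet (w.2.resolve_right hv)
      ((hw' ▸ w'.2 : (w : V) ∈ compSet G S D ∪ S).resolve_right hv)

end CliqueSeparator

/-- if `S` is a clique separator of `G`, then `tw G` is the maximum,
over all components `C` of `G \ S`, of the treewidth of `G[C ∪ S]` with `S`
completed into a clique. -/
theorem stmt5 {V : Type} [Finite V] (G : SimpleGraph V) (S : Set V)
    (hclique : G.IsClique S) (hdisc : ¬ (G.induce Sᶜ).Preconnected) :
    IsGreatest {k | ∃ C : (G.induce Sᶜ).ConnectedComponent,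
      k = tw (completedOn G (compSet G S C ∪ S) S)} (tw G) := by
  have : Nonempty (G.induce Sᶜ).ConnectedComponent :=
    not_isEmpty_iff.mp fun h => hdisc fun u => (h.false ((G.induce Sᶜ).connectedComponentMk u)).elim
  obtain ⟨C₀, hC₀⟩ := Finite.exists_max fun C => tw (completedOn G (compSet G S C ∪ S) S)
  have hle : ∀ C, tw (completedOn G (compSet G S C ∪ S) S) ≤ tw G :=
    fun C => tw_completedOn_le hclique _
  refine ⟨⟨C₀, le_antisymm (tw_le_of_forall_tw_completedOn_le hC₀) (hle C₀)⟩, ?_⟩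
  rintro _ ⟨C, rfl⟩
  exact hle C
end
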